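/- Let E be a Banach space and let {E_n} be a decreasing sequence of infinite-dimensional closed subspaces of E such that for each n ∈ ℕ the space E_n contains no n-subsymmetric sequence. Let {x_n} be a basic sequence with x_n ∈ E_n for each n ∈ ℕ, and let Ẽ be the closed linear span of {x_n}. Then Ẽ contains no subsymmetric sequence. -/

import Mathlib

open Filter Topology

/-- Two sequences of vectors are `c`-equivalent: the natural map between their spans
distorts norms of finite linear combinations by at most a factor `c`. -/
def SeqEquiv {E F : Type*} [NormedAddCommGroup E] [NormedSpace ℝ E]
    [NormedAddCommGroup F] [NormedSpace ℝ F]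
    (c : ℝ) (x : ℕ → E) (y : ℕ → F) : Prop :=
  ∀ (s : Finset ℕ) (a : ℕ → ℝ),
    (1 / c) * ‖∑ i ∈ s, a i • x i‖ ≤ ‖∑ i ∈ s, a i • y i‖ ∧
    ‖∑ i ∈ s, a i • y i‖ ≤ c * ‖∑ i ∈ s, a i • x i‖

/-- A basic sequence: nonzero vectors whose partial-sum projections are uniformly bounded,
i.e. a Schauder basis of its closed linear span. -/
def IsBasicSeq {E : Type*} [NormedAddCommGroup E] [NormedSpace ℝ E] (x : ℕ → E) : Prop :=
  (∀ n, x n ≠ 0) ∧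
  ∃ K : ℝ, 1 ≤ K ∧ ∀ (a : ℕ → ℝ) (m n : ℕ), m ≤ n →
    ‖∑ i ∈ Finset.range m, a i • x i‖ ≤ K * ‖∑ i ∈ Finset.range n, a i • x i‖

/-- An unconditional basic sequence. -/
def IsUnconditionalSeq {E : Type*} [NormedAddCommGroup E] [NormedSpace ℝ E]
    (x : ℕ → E) : Prop :=
  IsBasicSeq x ∧
  ∃ K : ℝ, 0 < K ∧ ∀ (s : Finset ℕ) (a ε : ℕ → ℝ), (∀ i, ε i = 1 ∨ ε i = -1) →
    ‖∑ i ∈ s, (ε i * a i) • x i‖ ≤ K * ‖∑ i ∈ s, a i • x i‖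

/-- A `C`-subsymmetric sequence: an unconditional basic sequence that is `C`-equivalent
to each of its subsequences. -/
def IsSubsymmetric {E : Type*} [NormedAddCommGroup E] [NormedSpace ℝ E]
    (C : ℝ) (x : ℕ → E) : Prop :=
  IsUnconditionalSeq x ∧ ∀ φ : ℕ → ℕ, StrictMono φ → SeqEquiv C x (x ∘ φ)

/-- A Schauder basis of `E`: biorthogonal system whose partial sums of the expansion of
every vector converge to that vector. -/
structure SchauderBasisR (E : Type*) [NormedAddCommGroup E] [NormedSpace ℝ E] where
  e : ℕ → E
  coord : ℕ → E →L[ℝ] ℝ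
  biorth : ∀ i j, coord i (e j) = if i = j then (1 : ℝ) else 0
  expand : ∀ x : E,
    Filter.Tendsto (fun n => ∑ i ∈ Finset.range n, coord i x • e i) atTop (𝓝 x)

/-- A block sequence with respect to a Schauder basis: nonzero, finitely supported
vectors with successive supports. -/
def IsBlockSeq {E : Type*} [NormedAddCommGroup E] [NormedSpace ℝ E]
    (b : SchauderBasisR E) (x : ℕ → E) : Prop :=
  (∀ n, x n ≠ 0) ∧
  (∀ n, (Function.support fun i => b.coord i (x n)).Finite) ∧
  ∀ m n, m < n → ∀ i ∈ Function.support (fun i => b.coord i (x m)),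
    ∀ j ∈ Function.support (fun j => b.coord j (x n)), i < j

/-- A block subspace: the closed linear span of a block sequence. -/
def IsBlockSubspace {E : Type*} [NormedAddCommGroup E] [NormedSpace ℝ E]
    (b : SchauderBasisR E) (M : Submodule ℝ E) : Prop :=
  ∃ x : ℕ → E, IsBlockSeq b x ∧ M = (Submodule.span ℝ (Set.range x)).topologicalClosure

/-- An infinite-dimensional closed subspace. -/
def InfDimClosed {E : Type*} [NormedAddCommGroup E] [NormedSpace ℝ E]
    (M : Submodule ℝ E) : Prop :=
  IsClosed (M : Set E) ∧ ¬ FiniteDimensional ℝ M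

/-- The quasi-order on subspaces: `L ≤ M` iff `L ⊆ M + F` for some finite-dimensional `F`. -/
def SubspaceLE {E : Type*} [NormedAddCommGroup E] [NormedSpace ℝ E]
    (L M : Submodule ℝ E) : Prop :=
  ∃ F : Submodule ℝ E, FiniteDimensional ℝ F ∧ L ≤ M ⊔ F

/-- The equivalence relation `≐` induced by the quasi-order `SubspaceLE`. -/
def SubspaceEquiv {E : Type*} [NormedAddCommGroup E] [NormedSpace ℝ E]
    (L M : Submodule ℝ E) : Prop :=
  SubspaceLE L M ∧ SubspaceLE M L

/-- Two normed spaces are `c`-isomorphic: a linear isomorphism with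
`(1/c)‖v‖ ≤ ‖Tv‖ ≤ c‖v‖`. -/
def IsoWithConst (c : ℝ) (X Y : Type*) [NormedAddCommGroup X] [NormedSpace ℝ X]
    [NormedAddCommGroup Y] [NormedSpace ℝ Y] : Prop :=
  ∃ T : X ≃ₗ[ℝ] Y, ∀ v : X, (1 / c) * ‖v‖ ≤ ‖T v‖ ∧ ‖T v‖ ≤ c * ‖v‖

/-- A `c`-minimal Banach space: every infinite-dimensional closed subspace contains a
further infinite-dimensional closed subspace `c`-isomorphic to the whole space. -/
def CMinimalSpace (c : ℝ) (X : Type*) [NormedAddCommGroup X] [NormedSpace ℝ X] : Prop :=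
  ∀ L : Submodule ℝ X, InfDimClosed L →
    ∃ N : Submodule ℝ X, N ≤ L ∧ InfDimClosed N ∧ IsoWithConst c ↥N X

/-- A minimal Banach space: every infinite-dimensional closed subspace contains a
further infinite-dimensional closed subspace isomorphic to the whole space. -/
def MinimalSpace (X : Type*) [NormedAddCommGroup X] [NormedSpace ℝ X] : Prop :=
  ∀ L : Submodule ℝ X, InfDimClosed L →
    ∃ N : Submodule ℝ X, N ≤ L ∧ InfDimClosed N ∧ Nonempty (↥N ≃L[ℝ] X)

/-!
Let `y` be a `C`-subsymmetric sequence in the closed span of `(x n)`. For any subsequence `ψ`,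
the pair differences `y (ψ (2m)) - y (ψ (2m+1))` are `C`-equivalent to the pair differences of
`y`, which are again `C`-subsymmetric; in particular each coefficient of a combination of them is
bounded by `κ` times its norm, with `κ` independent of `ψ`. Choose `ψ` (Bolzano–Weierstrass) so
that the first `n` coordinates of `y (ψ k)` with respect to `(x j)` converge geometrically fast.
Then the components of the pair differences in `span {x 0, …, x (n-1)}` are summably small, and
removing them is a `2`-equivalent perturbation which lands in the closed span of `(x j)_{j ≥ n}`,
hence in `E_n`. The perturbed sequence is `4C³`-subsymmetric, impossible in `E_n` once `n ≥ 4C³`.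
-/

open Finset Submodule

section BasicSeq

variable {E : Type*} [NormedAddCommGroup E] [NormedSpace ℝ E] {x : ℕ → E}

theorem IsBasicSeq.exists_abs_mul_norm_le (h : IsBasicSeq x) :
    ∃ K, ∀ (a : ℕ → ℝ) (N i : ℕ), i < N →
      |a i| * ‖x i‖ ≤ K * ‖∑ j ∈ range N, a j • x j‖ := by
  obtain ⟨-, K, -, hK⟩ := h
  refine ⟨2 * K, fun a N i hi => ?_⟩
  have hi' : a i • x i = ∑ j ∈ range (i + 1), a j • x j - ∑ j ∈ range i, a j • x j := by
    rw [sum_range_succ]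
    abel
  calc |a i| * ‖x i‖ = ‖a i • x i‖ := by rw [norm_smul, Real.norm_eq_abs]
    _ ≤ ‖∑ j ∈ range (i + 1), a j • x j‖ + ‖∑ j ∈ range i, a j • x j‖ := hi' ▸ norm_sub_le _ _
    _ ≤ K * ‖∑ j ∈ range N, a j • x j‖ + K * ‖∑ j ∈ range N, a j • x j‖ :=
        add_le_add (hK a _ _ hi) (hK a _ _ hi.le)
    _ = 2 * K * ‖∑ j ∈ range N, a j • x j‖ := by ring

theorem IsBasicSeq.linearIndependent (h : IsBasicSeq x) : LinearIndependent ℝ x := by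
  obtain ⟨K, hK⟩ := h.exists_abs_mul_norm_le
  rw [linearIndependent_iff'']
  intro s g hg hsum i
  obtain ⟨N, hN⟩ := exists_nat_subset_range (insert i s)
  have hsumN : ∑ j ∈ range N, g j • x j = 0 := by
    rwa [← sum_subset ((subset_insert _ _).trans hN) fun j _ hj => by rw [hg j hj, zero_smul]]
  have := hK g N i (mem_range.1 (hN (mem_insert_self i s)))
  rw [hsumN, norm_zero, mul_zero] at this
  by_contra hgi
  linarith [mul_pos (abs_pos.2 hgi) (norm_pos_iff.2 (h.1 i))]

theorem IsBasicSeq.exists_coord (h : IsBasicSeq x) :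
    ∃ f : ℕ → E →L[ℝ] ℝ, ∀ i j, f i (x j) = if i = j then 1 else 0 := by
  have hli := h.linearIndependent
  obtain ⟨K, hK⟩ := h.exists_abs_mul_norm_le
  suffices ∀ i, ∃ g : E →L[ℝ] ℝ, ∀ j, g (x j) = if i = j then 1 else 0 by
    choose f hf using this
    exact ⟨f, hf⟩
  intro i
  let φ : span ℝ (Set.range x) →ₗ[ℝ] ℝ := Finsupp.lapply i ∘ₗ hli.repr
  have hφ : ∀ v, ‖φ v‖ ≤ K / ‖x i‖ * ‖v‖ := by
    intro v
    obtain ⟨N, hN⟩ := exists_nat_subset_range (insert i (hli.repr v).support)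
    have hv : (v : E) = ∑ j ∈ range N, hli.repr v j • x j := by
      rw [← hli.linearCombination_repr v, Finsupp.linearCombination_apply,
        Finsupp.sum_of_support_subset _ ((subset_insert _ _).trans hN) _ (by simp)]
    rw [Real.norm_eq_abs, div_mul_eq_mul_div, le_div_iff₀ (norm_pos_iff.2 (h.1 i))]
    calc |φ v| * ‖x i‖ ≤ K * ‖∑ j ∈ range N, hli.repr v j • x j‖ :=
          hK _ N i (mem_range.1 (hN (mem_insert_self _ _)))
      _ = K * ‖v‖ := by rw [← hv]; rfl
  obtain ⟨g, hg, -⟩ := exists_extension_norm_eq _ (φ.mkContinuous _ hφ)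
  refine ⟨g, fun j => ?_⟩
  have hxj : x j ∈ span ℝ (Set.range x) := subset_span (Set.mem_range_self j)
  rw [show x j = ((⟨x j, hxj⟩ : span ℝ (Set.range x)) : E) from rfl, hg]
  simp [φ, hli.repr_eq_single j ⟨x j, hxj⟩ rfl, Finsupp.single_apply, eq_comm]

def partialSumProj (f : ℕ → E →L[ℝ] ℝ) (x : ℕ → E) (n : ℕ) : E →L[ℝ] E :=
  ∑ i ∈ range n, (f i).smulRight (x i)

variable {f : ℕ → E →L[ℝ] ℝ} {n : ℕ}

theorem partialSumProj_apply (v : E) :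
    partialSumProj f x n v = ∑ i ∈ range n, f i v • x i := by
  simp [partialSumProj]

theorem partialSumProj_mem_span (v : E) :
    partialSumProj f x n v ∈ span ℝ (x '' ↑(range n)) := by
  rw [partialSumProj_apply]
  exact sum_mem fun i hi => smul_mem _ _ (subset_span (Set.mem_image_of_mem x hi))

theorem sub_partialSumProj_mem_closure (hf : ∀ i j, f i (x j) = if i = j then 1 else 0)
    {v : E} (hv : v ∈ (span ℝ (Set.range x)).topologicalClosure) :
    v - partialSumProj f x n v ∈ (span ℝ (x '' Set.Ici n)).topologicalClosure := by
  let Q := ContinuousLinearMap.id ℝ E - partialSumProj f x n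
  have hQx : ∀ j, Q (x j) ∈ span ℝ (x '' Set.Ici n) := by
    intro j
    simp only [Q, sub_apply, ContinuousLinearMap.id_apply,
      partialSumProj_apply, hf, ite_smul, one_smul, zero_smul, sum_ite_eq', mem_range]
    split_ifs with hj
    · simp
    · simpa using subset_span (Set.mem_image_of_mem x (Set.mem_Ici.2 (not_lt.1 hj)))
  have hmaps : Set.MapsTo Q (span ℝ (Set.range x)) (span ℝ (x '' Set.Ici n)) := fun v hv =>
    (span_le (p := (span ℝ (x '' Set.Ici n)).comap (Q : E →ₗ[ℝ] E))).2
      (Set.range_subset_iff.2 hQx) hv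
  change Q v ∈ _
  rw [← SetLike.mem_coe, Submodule.topologicalClosure_coe] at hv ⊢
  exact map_mem_closure Q.continuous hv hmaps

end BasicSeq

section Equivalence

variable {E F G : Type*} [NormedAddCommGroup E] [NormedSpace ℝ E]
  [NormedAddCommGroup F] [NormedSpace ℝ F] [NormedAddCommGroup G] [NormedSpace ℝ G]

theorem sum_smul_comp_eq_sum_image (u : ℕ → E) {θ : ℕ → ℕ} (hθ : θ.Injective)
    (s : Finset ℕ) (a : ℕ → ℝ) :
    ∑ i ∈ s, a i • u (θ i) = ∑ j ∈ s.image θ, a (θ.invFun j) • u j := by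
  rw [sum_image fun i _ j _ hij => hθ hij]
  simp [Function.leftInverse_invFun hθ _]

namespace SeqEquiv

variable {c c' : ℝ} {x : ℕ → E} {y : ℕ → F} {z : ℕ → G}

theorem norm_apply (h : SeqEquiv c x y) (n : ℕ) :
    1 / c * ‖x n‖ ≤ ‖y n‖ ∧ ‖y n‖ ≤ c * ‖x n‖ := by
  simpa using h {n} fun _ => 1

theorem symm (h : SeqEquiv c x y) (hc : 0 < c) : SeqEquiv c y x := fun s a => by
  obtain ⟨h₁, h₂⟩ := h s a
  rw [one_div_mul_eq_div] at h₁ ⊢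
  exact ⟨(div_le_iff₀' hc).2 h₂, (div_le_iff₀' hc).1 h₁⟩

theorem trans (hxy : SeqEquiv c x y) (hyz : SeqEquiv c' y z) (hc' : 0 ≤ c') :
    SeqEquiv (c * c') x z := fun s a => by
  obtain ⟨h₁, h₂⟩ := hxy s a
  obtain ⟨h₃, h₄⟩ := hyz s a
  constructor
  · calc 1 / (c * c') * ‖∑ i ∈ s, a i • x i‖
        = 1 / c' * (1 / c * ‖∑ i ∈ s, a i • x i‖) := by ring
      _ ≤ 1 / c' * ‖∑ i ∈ s, a i • y i‖ := by gcongr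
      _ ≤ ‖∑ i ∈ s, a i • z i‖ := h₃
  · calc ‖∑ i ∈ s, a i • z i‖ ≤ c' * ‖∑ i ∈ s, a i • y i‖ := h₄
      _ ≤ c' * (c * ‖∑ i ∈ s, a i • x i‖) := by gcongr
      _ = c * c' * ‖∑ i ∈ s, a i • x i‖ := by ring

theorem mono (h : SeqEquiv c x y) (hc : 0 < c) (hcc' : c ≤ c') : SeqEquiv c' x y := fun s a => by
  obtain ⟨h₁, h₂⟩ := h s a
  constructor
  · calc 1 / c' * ‖∑ i ∈ s, a i • x i‖ ≤ 1 / c * ‖∑ i ∈ s, a i • x i‖ := by gcongr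
      _ ≤ _ := h₁
  · calc ‖∑ i ∈ s, a i • y i‖ ≤ c * ‖∑ i ∈ s, a i • x i‖ := h₂
      _ ≤ c' * ‖∑ i ∈ s, a i • x i‖ := by gcongr

theorem comp (h : SeqEquiv c x y) {θ : ℕ → ℕ} (hθ : θ.Injective) :
    SeqEquiv c (x ∘ θ) (y ∘ θ) := fun s a => by
  simp only [Function.comp_apply, sum_smul_comp_eq_sum_image _ hθ]
  exact h _ _

theorem norm_sum_le (h : SeqEquiv c x y) (hc : 0 < c) {K : ℝ} (hK : 0 ≤ K)
    {s t : Finset ℕ} {a b : ℕ → ℝ}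
    (hx : ‖∑ i ∈ s, a i • x i‖ ≤ K * ‖∑ i ∈ t, b i • x i‖) :
    ‖∑ i ∈ s, a i • y i‖ ≤ c * K * c * ‖∑ i ∈ t, b i • y i‖ :=
  calc ‖∑ i ∈ s, a i • y i‖ ≤ c * ‖∑ i ∈ s, a i • x i‖ := (h s a).2
    _ ≤ c * (K * (c * ‖∑ i ∈ t, b i • y i‖)) := by
        gcongr
        exact hx.trans (by gcongr; exact ((h.symm hc) t b).2)
    _ = c * K * c * ‖∑ i ∈ t, b i • y i‖ := by ring

end SeqEquiv

variable {c C : ℝ} {x z : ℕ → E} {w : ℕ → F}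

theorem IsBasicSeq.of_seqEquiv (hx : IsBasicSeq x) (h : SeqEquiv c x w) (hc : 1 ≤ c) :
    IsBasicSeq w := by
  obtain ⟨hne, K, hK1, hK⟩ := hx
  refine ⟨fun n hn => hne n ?_, c * K * c,
    one_le_mul_of_one_le_of_one_le (one_le_mul_of_one_le_of_one_le hc hK1) hc, fun a m n hmn =>
    h.norm_sum_le (by positivity) (by positivity) (hK a m n hmn)⟩
  have := (h.norm_apply n).1
  rw [hn, norm_zero] at this
  exact norm_le_zero_iff.1 <| (mul_nonpos_iff_pos_imp_nonpos.1 this).1 (by positivity)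

theorem IsUnconditionalSeq.of_seqEquiv (hx : IsUnconditionalSeq x) (h : SeqEquiv c x w)
    (hc : 1 ≤ c) : IsUnconditionalSeq w := by
  obtain ⟨hb, K, hK0, hK⟩ := hx
  exact ⟨hb.of_seqEquiv h hc, c * K * c, by positivity, fun s a ε hε =>
    h.norm_sum_le (by positivity) hK0.le (hK s a ε hε)⟩

namespace IsSubsymmetric

theorem norm_apply (h : IsSubsymmetric C z) (m : ℕ) :
    1 / C * ‖z 0‖ ≤ ‖z m‖ ∧ ‖z m‖ ≤ C * ‖z 0‖ := by
  simpa using (h.2 (m + ·) (strictMono_id.const_add m)).norm_apply 0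

theorem one_le (h : IsSubsymmetric C z) : 1 ≤ C :=
  (le_mul_iff_one_le_left (norm_pos_iff.2 (h.1.1.1 0))).1 (h.norm_apply 0).2

theorem mono (h : IsSubsymmetric C z) {C' : ℝ} (hCC' : C ≤ C') : IsSubsymmetric C' z :=
  ⟨h.1, fun θ hθ => (h.2 θ hθ).mono (by linarith [h.one_le]) hCC'⟩

theorem of_seqEquiv (h : IsSubsymmetric C z) (hzw : SeqEquiv c z w) (hc : 1 ≤ c) :
    IsSubsymmetric (c * C * c) w := by
  have hC := h.one_le
  refine ⟨h.1.of_seqEquiv hzw hc, fun θ hθ => ?_⟩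
  exact ((hzw.symm (by linarith)).trans (h.2 θ hθ) (by linarith)).trans
    (hzw.comp hθ.injective) (by linarith)

end IsSubsymmetric

end Equivalence

section PairDiff

def pairDiff {E : Type*} [Sub E] (y : ℕ → E) (m : ℕ) : E := y (2 * m) - y (2 * m + 1)

def pairIndices (s : Finset ℕ) : Finset ℕ := s.biUnion fun i => {2 * i, 2 * i + 1}

def pairCoeff (a : ℕ → ℝ) (j : ℕ) : ℝ := (-1) ^ j * a (j / 2)

def pairLift (θ : ℕ → ℕ) (j : ℕ) : ℕ := 2 * θ (j / 2) + j % 2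

theorem pairIndices_range (m : ℕ) : pairIndices (range m) = range (2 * m) := by
  ext j
  simp only [pairIndices, mem_biUnion, mem_range, mem_insert, mem_singleton]
  exact ⟨by rintro ⟨i, hi, rfl | rfl⟩ <;> omega, fun hj => ⟨j / 2, by omega, by omega⟩⟩

theorem pairCoeff_mul (ε a : ℕ → ℝ) (j : ℕ) :
    pairCoeff (fun i => ε i * a i) j = ε (j / 2) * pairCoeff a j := by
  simp only [pairCoeff]
  ring

theorem pairLift_strictMono {θ : ℕ → ℕ} (hθ : StrictMono θ) : StrictMono (pairLift θ) := by
  intro j j' hjj'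
  rcases (by omega : j / 2 < j' / 2 ∨ (j / 2 = j' / 2 ∧ j % 2 < j' % 2)) with h | ⟨h, h'⟩
  · have := hθ h
    simp only [pairLift]
    omega
  · simp only [pairLift, h]
    omega

theorem pairDiff_comp {E : Type*} [Sub E] (y : ℕ → E) (θ : ℕ → ℕ) :
    pairDiff y ∘ θ = pairDiff (y ∘ pairLift θ) := by
  ext m
  simp only [Function.comp_apply, pairDiff, pairLift, show (2 * m) / 2 = m by omega,
    show (2 * m + 1) / 2 = m by omega, show (2 * m) % 2 = 0 by omega,
    show (2 * m + 1) % 2 = 1 by omega, add_zero]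

variable {E F : Type*} [NormedAddCommGroup E] [NormedSpace ℝ E]
  [NormedAddCommGroup F] [NormedSpace ℝ F]

theorem sum_smul_pairDiff (y : ℕ → E) (s : Finset ℕ) (a : ℕ → ℝ) :
    ∑ i ∈ s, a i • pairDiff y i = ∑ j ∈ pairIndices s, pairCoeff a j • y j := by
  rw [pairIndices, sum_biUnion]
  · refine sum_congr rfl fun i _ => ?_
    rw [sum_pair (by omega), pairDiff, pairCoeff, pairCoeff, pow_succ, pow_mul, neg_one_sq,
      one_pow, show (2 * i + 1) / 2 = i by omega, Nat.mul_div_cancel_left _ two_pos]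
    module
  · intro i _ j _ hij
    simp only [Function.onFun, disjoint_left, mem_insert, mem_singleton]
    omega

theorem SeqEquiv.pairDiff {c : ℝ} {y : ℕ → E} {y' : ℕ → F} (h : SeqEquiv c y y') :
    SeqEquiv c (pairDiff y) (pairDiff y') := fun s a => by
  simp only [sum_smul_pairDiff]
  exact h _ _

variable {C : ℝ} {y : ℕ → E}

theorem IsBasicSeq.pairDiff (h : IsBasicSeq y) : IsBasicSeq (pairDiff y) := by
  have hinj := h.linearIndependent.injective
  obtain ⟨-, K, hK1, hK⟩ := h
  refine ⟨fun m => sub_ne_zero.2 (hinj.ne (by omega)), K, hK1, fun a m n hmn => ?_⟩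
  simp only [sum_smul_pairDiff, pairIndices_range]
  exact hK _ _ _ (by omega)

theorem IsUnconditionalSeq.pairDiff (h : IsUnconditionalSeq y) :
    IsUnconditionalSeq (pairDiff y) := by
  obtain ⟨hb, K, hK0, hK⟩ := h
  refine ⟨hb.pairDiff, K, hK0, fun s a ε hε => ?_⟩
  simp only [sum_smul_pairDiff, pairCoeff_mul]
  exact hK _ _ _ fun j => hε _

theorem IsSubsymmetric.pairDiff (h : IsSubsymmetric C y) : IsSubsymmetric C (pairDiff y) :=
  ⟨h.1.pairDiff, fun θ hθ => by
    rw [pairDiff_comp]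
    exact (h.2 _ (pairLift_strictMono hθ)).pairDiff⟩

end PairDiff

section CoeffBound

variable {E F : Type*} [NormedAddCommGroup E] [NormedSpace ℝ E]
  [NormedAddCommGroup F] [NormedSpace ℝ F]

def HasCoeffBound (κ : ℝ) (z : ℕ → E) : Prop :=
  ∀ (s : Finset ℕ) (a : ℕ → ℝ), ∀ j ∈ s, |a j| ≤ κ * ‖∑ i ∈ s, a i • z i‖

variable {κ c C : ℝ} {z : ℕ → E} {w : ℕ → F}

theorem two_mul_abs_mul_norm_le_of_unconditional {K : ℝ}
    (hK : ∀ (s : Finset ℕ) (a ε : ℕ → ℝ), (∀ i, ε i = 1 ∨ ε i = -1) →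
      ‖∑ i ∈ s, (ε i * a i) • z i‖ ≤ K * ‖∑ i ∈ s, a i • z i‖)
    {s : Finset ℕ} (a : ℕ → ℝ) {j : ℕ} (hj : j ∈ s) :
    2 * |a j| * ‖z j‖ ≤ (1 + K) * ‖∑ i ∈ s, a i • z i‖ := by
  set ε : ℕ → ℝ := fun i => if i = j then -1 else 1
  have hflip : ∑ i ∈ s, a i • z i - ∑ i ∈ s, (ε i * a i) • z i = (2 * a j) • z j := by
    rw [← sum_sub_distrib, sum_eq_single_of_mem j hj fun i _ hij => by simp [ε, hij]]
    simp only [ε, if_pos rfl]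
    module
  calc 2 * |a j| * ‖z j‖ = ‖(2 * a j) • z j‖ := by
        rw [norm_smul, Real.norm_eq_abs, abs_mul, abs_two]
    _ ≤ ‖∑ i ∈ s, a i • z i‖ + ‖∑ i ∈ s, (ε i * a i) • z i‖ := hflip ▸ norm_sub_le _ _
    _ ≤ (1 + K) * ‖∑ i ∈ s, a i • z i‖ := by
        linarith [hK s a ε fun i => by by_cases h : i = j <;> simp [ε, h]]

theorem IsSubsymmetric.exists_hasCoeffBound (h : IsSubsymmetric C z) :
    ∃ κ, HasCoeffBound κ z := by
  obtain ⟨-, K, -, hK⟩ := h.1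
  have hδ : 0 < 1 / C * ‖z 0‖ :=
    mul_pos (one_div_pos.2 (by linarith [h.one_le])) (norm_pos_iff.2 (h.1.1.1 0))
  refine ⟨(1 + K) / (2 * (1 / C * ‖z 0‖)), fun s a j hj => ?_⟩
  rw [div_mul_eq_mul_div, le_div_iff₀ (by positivity)]
  have := two_mul_abs_mul_norm_le_of_unconditional hK a hj
  nlinarith [(h.norm_apply j).1, abs_nonneg (a j)]

theorem HasCoeffBound.pos (h : HasCoeffBound κ z) : 0 < κ := by
  have := h {0} (fun _ => 1) 0 (mem_singleton_self 0)
  simp only [abs_one, sum_singleton, one_smul] at this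
  by_contra hκ
  nlinarith [norm_nonneg (z 0)]

theorem HasCoeffBound.of_seqEquiv (h : HasCoeffBound κ z) (hzw : SeqEquiv c z w) (hc : 0 < c) :
    HasCoeffBound (κ * c) w := fun s a j hj =>
  calc |a j| ≤ κ * ‖∑ i ∈ s, a i • z i‖ := h s a j hj
    _ ≤ κ * (c * ‖∑ i ∈ s, a i • w i‖) := by
        gcongr
        · exact h.pos.le
        · exact ((hzw.symm hc) s a).2
    _ = κ * c * ‖∑ i ∈ s, a i • w i‖ := by ring

theorem sum_one_div_two_pow_le_two (s : Finset ℕ) : ∑ i ∈ s, (1 / 2 : ℝ) ^ i ≤ 2 :=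
  (summable_geometric_two.sum_le_tsum s fun _ _ => by positivity).trans_eq tsum_geometric_two

theorem HasCoeffBound.norm_sum_sub_le {w : ℕ → E} {ε : ℝ} (h : HasCoeffBound κ z)
    (hw : ∀ m, ‖w m - z m‖ ≤ ε * (1 / 2) ^ m) (s : Finset ℕ) (a : ℕ → ℝ) :
    ‖∑ i ∈ s, a i • w i - ∑ i ∈ s, a i • z i‖ ≤ 2 * κ * ε * ‖∑ i ∈ s, a i • z i‖ := by
  have hε : 0 ≤ ε := by simpa using (norm_nonneg _).trans (hw 0)
  set S := ‖∑ i ∈ s, a i • z i‖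
  rw [← sum_sub_distrib]
  calc ‖∑ i ∈ s, (a i • w i - a i • z i)‖ ≤ ∑ i ∈ s, |a i| * ‖w i - z i‖ := by
        refine (norm_sum_le _ _).trans (sum_le_sum fun i _ => ?_)
        rw [← smul_sub, norm_smul, Real.norm_eq_abs]
    _ ≤ ∑ i ∈ s, κ * S * (ε * (1 / 2) ^ i) := by
        refine sum_le_sum fun i hi => ?_
        exact mul_le_mul (h s a i hi) (hw i) (norm_nonneg _) ((abs_nonneg _).trans (h s a i hi))
    _ = κ * S * ε * ∑ i ∈ s, (1 / 2 : ℝ) ^ i := by rw [mul_sum]; simp only [mul_assoc]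
    _ ≤ κ * S * ε * 2 := by
        have := h.pos
        gcongr
        exact sum_one_div_two_pow_le_two s
    _ = 2 * κ * ε * S := by ring

theorem HasCoeffBound.seqEquiv_two {w : ℕ → E} {ε : ℝ} (h : HasCoeffBound κ z)
    (hw : ∀ m, ‖w m - z m‖ ≤ ε * (1 / 2) ^ m) (hε : 4 * κ * ε ≤ 1) : SeqEquiv 2 z w :=
  fun s a => by
  have hsmall : ‖∑ i ∈ s, a i • w i - ∑ i ∈ s, a i • z i‖ ≤ 1 / 2 * ‖∑ i ∈ s, a i • z i‖ :=
    (h.norm_sum_sub_le hw s a).trans (by gcongr; linarith)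
  have h₁ := norm_sub_norm_le (∑ i ∈ s, a i • w i) (∑ i ∈ s, a i • z i)
  have h₂ := norm_sub_norm_le (∑ i ∈ s, a i • z i) (∑ i ∈ s, a i • w i)
  rw [norm_sub_rev] at h₂
  constructor <;> linarith

end CoeffBound

section Extraction

theorem exists_strictMono_dist_pair_le {X : Type*} [PseudoMetricSpace X] [ProperSpace X]
    {u : ℕ → X} (hu : Bornology.IsBounded (Set.range u)) {ε : ℕ → ℝ} (hε : ∀ m, 0 < ε m) :
    ∃ ψ : ℕ → ℕ, StrictMono ψ ∧ ∀ m, dist (u (ψ (2 * m))) (u (ψ (2 * m + 1))) ≤ ε m := by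
  obtain ⟨L, -, σ, hσ, hlim⟩ := tendsto_subseq_of_bounded hu (Set.mem_range_self ·)
  have hev : ∀ l, ∀ᶠ k in atTop, dist ((u ∘ σ) k) L ≤ ε (l / 2) / 2 := fun l =>
    hlim.eventually (Metric.closedBall_mem_nhds L (by linarith [hε (l / 2)]))
  obtain ⟨τ, hτ, hτL⟩ := extraction_forall_of_eventually hev
  refine ⟨σ ∘ τ, hσ.comp hτ, fun m => ?_⟩
  have h₁ := hτL (2 * m)
  have h₂ := hτL (2 * m + 1)
  rw [show 2 * m / 2 = m by omega] at h₁
  rw [show (2 * m + 1) / 2 = m by omega] at h₂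
  simp only [Function.comp_apply] at h₁ h₂ ⊢
  linarith [dist_triangle_right (u (σ (τ (2 * m)))) (u (σ (τ (2 * m + 1)))) L]

theorem exists_strictMono_norm_map_pairDiff_le {E F : Type*} [NormedAddCommGroup E]
    [NormedSpace ℝ E] [NormedAddCommGroup F] [NormedSpace ℝ F]
    (S : Submodule ℝ F) [FiniteDimensional ℝ S] (P : E →L[ℝ] F) (hP : ∀ v, P v ∈ S)
    {y : ℕ → E} {R : ℝ} (hy : ∀ k, ‖y k‖ ≤ R) {ε : ℕ → ℝ} (hε : ∀ m, 0 < ε m) :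
    ∃ ψ : ℕ → ℕ, StrictMono ψ ∧ ∀ m, ‖P (pairDiff (y ∘ ψ) m)‖ ≤ ε m := by
  let u : ℕ → S := fun k => ⟨P (y k), hP _⟩
  have hu : Bornology.IsBounded (Set.range u) := by
    refine isBounded_iff_forall_norm_le.2 ⟨‖P‖ * R, Set.forall_mem_range.2 fun k => ?_⟩
    exact (P.le_opNorm _).trans (by gcongr; exact hy k)
  obtain ⟨ψ, hψ, hdist⟩ := exists_strictMono_dist_pair_le hu hε
  refine ⟨ψ, hψ, fun m => ?_⟩
  simpa [u, pairDiff, dist_eq_norm] using hdist m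

end Extraction

theorem diagonal_no_subsymmetric_general
    {E : Type*} [NormedAddCommGroup E] [NormedSpace ℝ E]
    (Esub : ℕ → Submodule ℝ E)
    (hinf : ∀ n, InfDimClosed (Esub n))
    (hdec : ∀ n, Esub (n + 1) ≤ Esub n)
    (hno : ∀ n : ℕ, ¬ ∃ y : ℕ → E, (∀ k, y k ∈ Esub n) ∧ IsSubsymmetric (n : ℝ) y)
    (x : ℕ → E) (hbasic : IsBasicSeq x) (hx : ∀ n, x n ∈ Esub n) :
    ¬ ∃ (C : ℝ) (y : ℕ → E), 1 ≤ C ∧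
      (∀ k, y k ∈ (Submodule.span ℝ (Set.range x)).topologicalClosure) ∧
      IsSubsymmetric C y := by
  rintro ⟨C, y, hC, hyx, hy⟩
  obtain ⟨f, hf⟩ := hbasic.exists_coord
  obtain ⟨κ, hκ⟩ := hy.pairDiff.exists_hasCoeffBound
  have hκC : 0 < κ * C := mul_pos hκ.pos (by linarith)
  set n := ⌈C * 2 * C * (C * 2)⌉₊
  have htail : (span ℝ (x '' Set.Ici n)).topologicalClosure ≤ Esub n :=
    topologicalClosure_minimal _ (span_le.2 <| Set.image_subset_iff.2 fun j hj =>
      antitone_nat_of_succ_le hdec hj (hx j)) (hinf n).1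
  have := FiniteDimensional.span_of_finite ℝ ((range n).finite_toSet.image x)
  obtain ⟨ψ, hψ, hPψ⟩ := exists_strictMono_norm_map_pairDiff_le _ (partialSumProj f x n)
    partialSumProj_mem_span (fun k => (hy.norm_apply k).2)
    (ε := fun m => (4 * (κ * C))⁻¹ * (1 / 2) ^ m) fun m => by positivity
  set d := pairDiff (y ∘ ψ)
  set w := fun m => d m - partialSumProj f x n (d m)
  have hDd : SeqEquiv C (pairDiff y) d := (hy.2 ψ hψ).pairDiff
  have hdw : SeqEquiv 2 d w := (hκ.of_seqEquiv hDd (by linarith)).seqEquiv_two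
    (fun m => by simpa [w] using hPψ m) (mul_inv_cancel₀ (mul_pos four_pos hκC).ne').le
  refine hno n ⟨w, fun m => htail (sub_partialSumProj_mem_closure hf (sub_mem (hyx _) (hyx _))),
    ?_⟩
  exact (hy.pairDiff.of_seqEquiv (hDd.trans hdw (by norm_num)) (by linarith)).mono
      (Nat.le_ceil _)

/-- If `{E_n}` is a decreasing sequence of infinite-dimensional closed
subspaces such that `E_n` contains no `n`-subsymmetric sequence, and `{x_n}` is a basic
sequence with `x_n ∈ E_n`, then the closed span of `{x_n}` contains no subsymmetric
sequence. -/
theorem diagonal_no_subsymmetric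
    {E : Type*} [NormedAddCommGroup E] [NormedSpace ℝ E] [CompleteSpace E]
    (Esub : ℕ → Submodule ℝ E)
    (hinf : ∀ n, InfDimClosed (Esub n))
    (hdec : ∀ n, Esub (n + 1) ≤ Esub n)
    (hno : ∀ n : ℕ, ¬ ∃ y : ℕ → E, (∀ k, y k ∈ Esub n) ∧ IsSubsymmetric (n : ℝ) y)
    (x : ℕ → E) (hbasic : IsBasicSeq x) (hx : ∀ n, x n ∈ Esub n) :
    ¬ ∃ (C : ℝ) (y : ℕ → E), 1 ≤ C ∧
      (∀ k, y k ∈ (Submodule.span ℝ (Set.range x)).topologicalClosure) ∧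
      IsSubsymmetric C y :=
  diagonal_no_subsymmetric_general Esub hinf hdec hno x hbasic hx
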